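/- For λ₁, λ₂ ∈ Λ⁺ with λ₁ ≠ λ₂ and λ₁ − λ₂ in the coroot lattice ℤΦ^∨, the open strata are disjoint: 𝖯°_{λ₁} ∩ 𝖯°_{λ₂} = ∅. (Disjointness part of the paper's Corollary 3.21 on the stratification of the dominant rational coweight cone.) -/

import Mathlib

/-!
Setting: a finite reduced crystallographic root system of rank `r`, given by simple
coroots `coroot i = αᵢ^∨` in a `ℚ`-vector space `V` (playing the role of `Λ_ℚ`) together
with the pairing functionals `pairing i = ⟨αᵢ, ·⟩` against the simple roots, and a lattice
of coweights `Λ ⊆ V` containing the coroot lattice on which the simple roots take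
integral values.
-/

/-- The cone `𝖣 ⊆ Λ_ℚ` of nonnegative rational combinations of the simple coroots. -/
def Dcone {V : Type*} [AddCommGroup V] [Module ℚ V] {r : ℕ} (coroot : Fin r → V) : Set V :=
  {ν | ∃ c : Fin r → ℚ, (∀ i, 0 ≤ c i) ∧ ν = ∑ i, c i • coroot i}

/-- `μ ≤ lam` : `lam - μ` is a nonnegative *integral* combination of the simple coroots. -/
def leZ {V : Type*} [AddCommGroup V] [Module ℚ V] {r : ℕ} (coroot : Fin r → V)
    (μ lam : V) : Prop :=
  ∃ c : Fin r → ℕ, lam - μ = ∑ i, (c i : ℚ) • coroot i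

/-- `μ ≤_ℚ lam` : `lam - μ ∈ 𝖣`. -/
def leQ {V : Type*} [AddCommGroup V] [Module ℚ V] {r : ℕ} (coroot : Fin r → V)
    (μ lam : V) : Prop :=
  lam - μ ∈ Dcone coroot

/-- A (rational) coweight is dominant if its pairing with every simple root is
nonnegative. -/
def IsDominant {V : Type*} [AddCommGroup V] [Module ℚ V] {r : ℕ}
    (pairing : Fin r → V →ₗ[ℚ] ℚ) (ν : V) : Prop :=
  ∀ i, 0 ≤ pairing i ν

/-- The dominant coweight polytope `𝖯_lam = Λ_ℚ⁺ ∩ (lam − 𝖣)`. -/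
def domPolytope {V : Type*} [AddCommGroup V] [Module ℚ V] {r : ℕ}
    (coroot : Fin r → V) (pairing : Fin r → V →ₗ[ℚ] ℚ) (lam : V) : Set V :=
  {ν | IsDominant pairing ν ∧ leQ coroot ν lam}

/-- The open stratum `𝖯_lam° = 𝖯_lam \ ⋃_{μ ∈ Λ⁺, μ ≤ lam, μ ≠ lam} 𝖯_μ`. -/
def openStratum {V : Type*} [AddCommGroup V] [Module ℚ V] {r : ℕ}
    (coroot : Fin r → V) (pairing : Fin r → V →ₗ[ℚ] ℚ) (Λ : AddSubgroup V) (lam : V) :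
    Set V :=
  domPolytope coroot pairing lam \
    ⋃ μ ∈ {μ : V | μ ∈ Λ ∧ IsDominant pairing μ ∧ leZ coroot μ lam ∧ μ ≠ lam},
      domPolytope coroot pairing μ

/-!
If `ν` lies in both open strata, write `lam₁ - ν = ∑ dᵢ αᵢ^∨` and `lam₂ - ν = ∑ eᵢ αᵢ^∨` with
`d, e ≥ 0`. By linear independence `d - e = c`, the integral coefficients of `lam₁ - lam₂`.
Put `μ = lam₁ - ∑ cᵢ⁺ αᵢ^∨ = lam₂ - ∑ cᵢ⁻ αᵢ^∨`. Then `μ - ν = ∑ min(dᵢ, eᵢ) αᵢ^∨`, so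
`ν ∈ 𝖯_μ`; and `μ` is dominant, because at each `j` one of the two expressions for `μ` does not
involve `αⱼ^∨`, while `⟨αⱼ, αᵢ^∨⟩ ≤ 0` for `i ≠ j`. Since `μ ≤ lam₁`, `μ ≤ lam₂` and `μ` differs
from one of them, `ν` is removed from that open stratum.
-/

section

variable {V : Type*} [AddCommGroup V] [Module ℚ V] {r : ℕ} {coroot : Fin r → V}
  {pairing : Fin r → V →ₗ[ℚ] ℚ}

theorem sum_natCast_smul_mem {Λ : AddSubgroup V} (hΛ : ∀ i, coroot i ∈ Λ) (p : Fin r → ℕ) :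
    ∑ i, (p i : ℚ) • coroot i ∈ Λ :=
  Λ.sum_mem fun i _ => by
    rw [Nat.cast_smul_eq_nsmul ℚ]
    exact Λ.nsmul_mem (hΛ i) (p i)

theorem pairing_sub_sum_nonneg (hoff : ∀ i j, i ≠ j → pairing i (coroot j) ≤ 0) {j : Fin r}
    {lam : V} (hlam : 0 ≤ pairing j lam) {p : Fin r → ℚ} (hp : ∀ i, 0 ≤ p i) (hpj : p j = 0) :
    0 ≤ pairing j (lam - ∑ i, p i • coroot i) := by
  have hsum : ∑ i, p i * pairing j (coroot i) ≤ 0 := by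
    refine Finset.sum_nonpos fun i _ => ?_
    rcases eq_or_ne i j with rfl | hij
    · simp [hpj]
    · exact mul_nonpos_of_nonneg_of_nonpos (hp i) (hoff j i hij.symm)
  simp only [map_sub, map_sum, map_smul, smul_eq_mul]
  linarith

theorem isDominant_of_eq_sub_sum (hoff : ∀ i j, i ≠ j → pairing i (coroot j) ≤ 0)
    {lam₁ lam₂ : V} (h₁ : IsDominant pairing lam₁) (h₂ : IsDominant pairing lam₂)
    {p q : Fin r → ℚ} (hp : ∀ i, 0 ≤ p i) (hq : ∀ i, 0 ≤ q i) (hpq : ∀ j, p j = 0 ∨ q j = 0)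
    (heq : lam₁ - ∑ i, p i • coroot i = lam₂ - ∑ i, q i • coroot i) :
    IsDominant pairing (lam₁ - ∑ i, p i • coroot i) := by
  intro j
  rcases hpq j with hpj | hqj
  · exact pairing_sub_sum_nonneg hoff (h₁ j) hp hpj
  · exact heq ▸ pairing_sub_sum_nonneg hoff (h₂ j) hq hqj

theorem exists_common_lower_bound (hli : LinearIndependent ℚ coroot) {lam₁ lam₂ ν : V}
    {c : Fin r → ℤ} (hc : lam₁ - lam₂ = ∑ i, (c i : ℚ) • coroot i)
    (h₁ : leQ coroot ν lam₁) (h₂ : leQ coroot ν lam₂) :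
    ∃ p q : Fin r → ℕ, (∀ j, p j = 0 ∨ q j = 0) ∧
      lam₁ - ∑ i, (p i : ℚ) • coroot i = lam₂ - ∑ i, (q i : ℚ) • coroot i ∧
      leQ coroot ν (lam₁ - ∑ i, (p i : ℚ) • coroot i) := by
  obtain ⟨d, hd0, hd⟩ := h₁
  obtain ⟨e, he0, he⟩ := h₂
  have hde : ∀ i, d i = e i + c i := by
    refine Fintype.linearIndependent_iffₛ.mp hli d (fun i => e i + c i) ?_
    simp only [add_smul, Finset.sum_add_distrib, ← hd, ← he, ← hc]
    abel
  refine ⟨fun i => (c i).toNat, fun i => (-c i).toNat, fun j => by dsimp only; omega, ?_, ?_⟩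
  · rw [sub_eq_sub_iff_sub_eq_sub, hc, ← Finset.sum_sub_distrib]
    refine Finset.sum_congr rfl fun i _ => ?_
    rw [← sub_smul]
    exact_mod_cast congrArg (fun n : ℤ => (n : ℚ) • coroot i) (Int.toNat_sub_toNat_neg (c i)).symm
  · have hp : ∀ i, ((c i).toNat : ℚ) = max (c i : ℚ) 0 := fun i => by
      exact_mod_cast congrArg (Int.cast : ℤ → ℚ) (Int.toNat_eq_max (c i))
    refine ⟨fun i => d i - (c i).toNat, fun i => ?_, ?_⟩
    · rw [sub_nonneg, hp, max_le_iff]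
      exact ⟨by linarith [hde i, he0 i], hd0 i⟩
    · simp only [sub_smul, Finset.sum_sub_distrib, ← hd]
      abel

theorem notMem_openStratum_of_mem_domPolytope {Λ : AddSubgroup V} {lam μ ν : V} (hμΛ : μ ∈ Λ)
    (hμ : IsDominant pairing μ) (hle : leZ coroot μ lam) (hne : μ ≠ lam)
    (hν : ν ∈ domPolytope coroot pairing μ) : ν ∉ openStratum coroot pairing Λ lam :=
  fun h => h.2 (Set.mem_biUnion ⟨hμΛ, hμ, hle, hne⟩ hν)

end

theorem open_strata_disjoint_general
    {V : Type*} [AddCommGroup V] [Module ℚ V] {r : ℕ}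
    (coroot : Fin r → V) (pairing : Fin r → V →ₗ[ℚ] ℚ) (Λ : AddSubgroup V)
    (hli : LinearIndependent ℚ coroot)
    (hoff : ∀ i j, i ≠ j → pairing i (coroot j) ≤ 0)
    (hΛcoroot : ∀ i, coroot i ∈ Λ)
    (lam₁ lam₂ : V) (h₁Λ : lam₁ ∈ Λ)
    (h₁dom : IsDominant pairing lam₁) (h₂dom : IsDominant pairing lam₂)
    (hne : lam₁ ≠ lam₂)
    (hdiff : ∃ c : Fin r → ℤ, lam₁ - lam₂ = ∑ i, (c i : ℚ) • coroot i) :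
    openStratum coroot pairing Λ lam₁ ∩ openStratum coroot pairing Λ lam₂ = ∅ := by
  rw [Set.eq_empty_iff_forall_notMem]
  rintro ν ⟨hν₁, hν₂⟩
  obtain ⟨c, hc⟩ := hdiff
  obtain ⟨p, q, hpq, heq, hνμ⟩ := exists_common_lower_bound hli hc hν₁.1.2 hν₂.1.2
  set μ := lam₁ - ∑ i, (p i : ℚ) • coroot i
  have hμΛ : μ ∈ Λ := Λ.sub_mem h₁Λ (sum_natCast_smul_mem hΛcoroot p)
  have hμdom : IsDominant pairing μ := isDominant_of_eq_sub_sum hoff h₁dom h₂dom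
    (fun i => (p i).cast_nonneg) (fun i => (q i).cast_nonneg) (fun j => by simp [hpq j]) heq
  have hνμ : ν ∈ domPolytope coroot pairing μ := ⟨hν₁.1.1, hνμ⟩
  rcases eq_or_ne μ lam₁ with h | h
  · exact notMem_openStratum_of_mem_domPolytope hμΛ hμdom ⟨q, by rw [heq, sub_sub_cancel]⟩
      (h ▸ hne) hνμ hν₂
  · exact notMem_openStratum_of_mem_domPolytope hμΛ hμdom ⟨p, sub_sub_cancel _ _⟩ h hνμ hν₁

/-- Corollary 3.21 (disjointness): for distinct `lam₁, lam₂ ∈ Λ⁺` whose difference lies in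
the coroot lattice, the open strata are disjoint: `𝖯°_{lam₁} ∩ 𝖯°_{lam₂} = ∅`. -/
theorem open_strata_disjoint
    {V : Type*} [AddCommGroup V] [Module ℚ V] {r : ℕ}
    (coroot : Fin r → V) (pairing : Fin r → V →ₗ[ℚ] ℚ) (Λ : AddSubgroup V)
    (hli : LinearIndependent ℚ coroot)
    (hdiag : ∀ i, pairing i (coroot i) = 2)
    (hoff : ∀ i j, i ≠ j → pairing i (coroot j) ≤ 0)
    (hΛcoroot : ∀ i, coroot i ∈ Λ)
    (hΛint : ∀ μ ∈ Λ, ∀ i, ∃ n : ℤ, pairing i μ = (n : ℚ))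
    (lam₁ lam₂ : V) (h₁Λ : lam₁ ∈ Λ) (h₂Λ : lam₂ ∈ Λ)
    (h₁dom : IsDominant pairing lam₁) (h₂dom : IsDominant pairing lam₂)
    (hne : lam₁ ≠ lam₂)
    (hdiff : ∃ c : Fin r → ℤ, lam₁ - lam₂ = ∑ i, (c i : ℚ) • coroot i) :
    openStratum coroot pairing Λ lam₁ ∩ openStratum coroot pairing Λ lam₂ = ∅ :=
  open_strata_disjoint_general coroot pairing Λ hli hoff hΛcoroot lam₁ lam₂ h₁Λ h₁dom h₂dom hne
    hdiff
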